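/- arXiv:2503.09662 — 5 statements merged into one kernel-verified Lean document; each statement's English description precedes it below -/
import Mathlib

section
/- Let μ, μ_w, μ_s be real numbers with ‖μ_s − μ‖ < ‖μ_w − μ‖ and (μ − μ_s)·(μ_s − μ_w) > 0. Define B(ω) = ω·μ_s + (1−ω)·μ_w and E(ω) = (B(ω) − μ)². Then the derivative E′(ω) is negative at both ω = 0 and ω = 1. -/
/-! The derivative of `E` is `E'(ω) = 2 (B(ω) - μ) (μs - μw)`. At `ω = 1` this is
`-2 (μ - μs)(μs - μw) < 0`; at `ω = 0`, writing `μw - μ = (μw - μs) + (μs - μ)` gives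
`E'(0) = -2 (μs - μw)² - 2 (μ - μs)(μs - μw) < 0`. -/

theorem hasDerivAt_sq_interpolation_sub (μ μw μs x : ℝ) :
    HasDerivAt (fun ω : ℝ => (ω * μs + (1 - ω) * μw - μ) ^ 2)
      (2 * (x * μs + (1 - x) * μw - μ) * (μs - μw)) x := by
  have hB : HasDerivAt (fun ω : ℝ => ω * μs + (1 - ω) * μw - μ) (μs - μw) x := by
    have := (((hasDerivAt_id x).mul_const μs).add
      (((hasDerivAt_const x (1 : ℝ)).sub (hasDerivAt_id x)).mul_const μw)).sub_const μ
    exact this.congr_deriv (by ring)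
  exact (hB.pow 2).congr_deriv (by push_cast; ring)

theorem w2s_deriv_neg_at_zero_and_one_general (μ μw μs : ℝ)
    (h2 : (μ - μs) * (μs - μw) > 0) :
    deriv (fun ω : ℝ => (ω * μs + (1 - ω) * μw - μ) ^ 2) 0 < 0 ∧
    deriv (fun ω : ℝ => (ω * μs + (1 - ω) * μw - μ) ^ 2) 1 < 0 := by
  rw [(hasDerivAt_sq_interpolation_sub μ μw μs 0).deriv,
    (hasDerivAt_sq_interpolation_sub μ μw μs 1).deriv]
  constructor
  · have hsplit : (0 * μs + (1 - 0) * μw - μ) * (μs - μw)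
        = -(μs - μw) ^ 2 - (μ - μs) * (μs - μw) := by ring
    linarith [sq_nonneg (μs - μw)]
  · have hone : (1 * μs + (1 - 1) * μw - μ) * (μs - μw) = -((μ - μs) * (μs - μw)) := by ring
    linarith

theorem w2s_deriv_neg_at_zero_and_one (μ μw μs : ℝ)
    (h1 : ‖μs - μ‖ < ‖μw - μ‖)
    (h2 : (μ - μs) * (μs - μw) > 0) :
    deriv (fun ω : ℝ => (ω * μs + (1 - ω) * μw - μ) ^ 2) 0 < 0 ∧
    deriv (fun ω : ℝ => (ω * μs + (1 - ω) * μw - μ) ^ 2) 1 < 0 :=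
  w2s_deriv_neg_at_zero_and_one_general μ μw μs h2
end

section
/- Let μ, μ_w, μ_s be real numbers with (μ − μ_s)·(μ_s − μ_w) > 0. Then there exists ω > 1 such that (ω·μ_s + (1−ω)·μ_w − μ)² < (μ_s − μ)² and (ω·μ_s + (1−ω)·μ_w − μ)² < (μ_w − μ)². -/
theorem w2s_exists_improving_scale (μ μw μs : ℝ)
    (h : (μ - μs) * (μs - μw) > 0) :
    ∃ ω : ℝ, ω > 1 ∧
      (ω * μs + (1 - ω) * μw - μ) ^ 2 < (μs - μ) ^ 2 ∧
      (ω * μs + (1 - ω) * μw - μ) ^ 2 < (μw - μ) ^ 2 := by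
  have hd : μs - μw ≠ 0 := by
    intro h0
    rw [h0, mul_zero] at h
    exact lt_irrefl 0 h
  have he : μ - μs ≠ 0 := by
    intro h0
    rw [h0, zero_mul] at h
    exact lt_irrefl 0 h
  refine ⟨1 + (μ - μs) / (2 * (μs - μw)), ?_, ?_, ?_⟩
  · have : (μ - μs) / (2 * (μs - μw)) = ((μ - μs) * (μs - μw)) / (2 * (μs - μw) ^ 2) := by
      field_simp
    have hpos : (0:ℝ) < ((μ - μs) * (μs - μw)) / (2 * (μs - μw) ^ 2) :=
      div_pos h (by positivity)
    linarith [this ▸ hpos]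
  · have hval : (1 + (μ - μs) / (2 * (μs - μw))) * μs +
        (1 - (1 + (μ - μs) / (2 * (μs - μw)))) * μw - μ = -(μ - μs) / 2 := by
      field_simp; ring
    rw [hval]
    have : (0:ℝ) < (μ - μs) ^ 2 := by positivity
    nlinarith [this]
  · have hval : (1 + (μ - μs) / (2 * (μs - μw))) * μs +
        (1 - (1 + (μ - μs) / (2 * (μs - μw)))) * μw - μ = -(μ - μs) / 2 := by
      field_simp; ring
    rw [hval]
    nlinarith [h, sq_nonneg (μs - μw), sq_nonneg (μ - μs)]
end

section
/- In a finite-dimensional real inner product space, let μ, μ_w, μ_s be vectors such that μ_s − μ_w ≠ 0, ⟪μ_s − μ_w, μ_w − μ⟫ < 0, and ⟪μ_s − μ_w, μ_s − μ⟫ < 0. Then there exists ω > 1 with ‖ω·μ_s + (1−ω)·μ_w − μ‖² < min(‖μ_s − μ‖², ‖μ_w − μ‖²). -/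
open RealInnerProductSpace

theorem w2s_vector_improvement {V : Type*} [NormedAddCommGroup V]
    [InnerProductSpace ℝ V] [FiniteDimensional ℝ V]
    (μ μw μs : V)
    (hne : μs - μw ≠ 0)
    (h0 : ⟪μs - μw, μw - μ⟫ < 0)
    (h1 : ⟪μs - μw, μs - μ⟫ < 0) :
    ∃ ω : ℝ, ω > 1 ∧
      ‖ω • μs + (1 - ω) • μw - μ‖ ^ 2 < min (‖μs - μ‖ ^ 2) (‖μw - μ‖ ^ 2) := by
  set d := μs - μw with hd
  set a := μw - μ with ha
  set s : ℝ := ‖d‖ ^ 2 with hs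
  set c : ℝ := ⟪d, a⟫ with hc
  have hspos : 0 < s := by
    have := norm_pos_iff.mpr hne
    positivity
  have hsc : s + c < 0 := by
    have heq : μs - μ = d + a := by simp [hd, ha]
    rw [heq, inner_add_right] at h1
    have hdd : ⟪d, d⟫ = s := by
      rw [real_inner_self_eq_norm_sq, hs]
    linarith
  have key : ∀ t : ℝ, ‖t • d + a‖ ^ 2 = t ^ 2 * s + 2 * t * c + ‖a‖ ^ 2 := by
    intro t
    rw [norm_add_sq_real, norm_smul, real_inner_smul_left]
    simp [mul_pow, hs]
    ring
  have hform : ∀ t : ℝ, t • μs + (1 - t) • μw - μ = t • d + a := by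
    intro t
    simp [hd, ha, smul_sub, sub_smul, one_smul]
    abel
  refine ⟨-c / s, ?_, ?_⟩
  · rw [gt_iff_lt, lt_div_iff₀ hspos]; linarith
  · rw [hform, key]
    have hμs : ‖μs - μ‖ ^ 2 = 1 ^ 2 * s + 2 * 1 * c + ‖a‖ ^ 2 := by
      rw [← key 1]; congr 1; simp [hd, ha]
    have hμw : ‖μw - μ‖ ^ 2 = 0 ^ 2 * s + 2 * 0 * c + ‖a‖ ^ 2 := by
      rw [← key 0]; simp [ha]
    rw [hμs, hμw, lt_min_iff]
    have hc0 : c < 0 := h0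
    have hcs : c ^ 2 = c ^ 2 / s * s := by field_simp
    have hE : (-c / s) ^ 2 * s + 2 * (-c / s) * c = -(c ^ 2 / s) := by
      field_simp; ring
    constructor
    · nlinarith [sq_nonneg (s + c)]
    · nlinarith [sq_nonneg c, mul_pos hspos hspos]
end

section
/- Let μ, μ_w, μ_s be real numbers with (μ − μ_s)·(μ_s − μ_w) > 0 and |μ_s − μ| < |μ_w − μ|. Then for every ω in the open interval (1, 2·ω* − 1), where ω* = (μ − μ_w)/(μ_s − μ_w), the guided estimate B(ω) = ω·μ_s + (1−ω)·μ_w satisfies |B(ω) − μ| < |μ_s − μ|. -/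
theorem w2s_improvement_interval (μ μw μs : ℝ)
    (h : (μ - μs) * (μs - μw) > 0)
    (hlt : |μs - μ| < |μw - μ|) :
    ∀ ω : ℝ, ω ∈ Set.Ioo 1 (2 * ((μ - μw) / (μs - μw)) - 1) →
      |ω * μs + (1 - ω) * μw - μ| < |μs - μ| := by
  intro ω hω
  obtain ⟨h1, h2⟩ := hω
  have hd : μs - μw ≠ 0 := by
    intro hz
    rw [hz, mul_zero] at h
    exact lt_irrefl 0 h
  set ωs : ℝ := (μ - μw) / (μs - μw) with hωsdef
  have hωs : ωs * (μs - μw) = μ - μw := div_mul_cancel₀ _ hd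
  have hx : ω * μs + (1 - ω) * μw - μ = (μs - μw) * (ω - ωs) := by
    linear_combination hωs
  have hy : μs - μ = (μs - μw) * (1 - ωs) := by
    linear_combination hωs
  have hd2 : (μs - μw) ^ 2 > 0 := by positivity
  have hkey : (ω - 1) * ((2 * ωs - 1) - ω) > 0 :=
    mul_pos (by linarith) (by linarith)
  have hsq : (ω * μs + (1 - ω) * μw - μ) ^ 2 < (μs - μ) ^ 2 := by
    rw [hx, hy]
    nlinarith [mul_pos hd2 hkey]
  set x := ω * μs + (1 - ω) * μw - μ
  nlinarith [sq_abs x, sq_abs (μs - μ), abs_nonneg x, abs_nonneg (μs - μ), hsq]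
end

section
/- Let w₁,…,w_M ≥ 0 and for each i let μ_i, μ_i^w, μ_i^s ∈ ℝ satisfy (μ_i − μ_i^s)(μ_i^s − μ_i^w) > 0. Define F(ω) = Σ_i w_i (ω·μ_i^s + (1−ω)·μ_i^w − μ_i)². If not all weights are zero and at least one i with w_i > 0 has μ_i^s ≠ μ_i^w, then F is a convex quadratic in ω with F′(1) < 0 whenever each term with w_i > 0 has (μ_i^s − μ_i^w)(μ_i^s − μ_i) < 0; consequently there exists ω > 1 with F(ω) < F(1). -/
/-!
Each summand of `F` is a nonnegatively weighted square of an affine function of `ω`, so `F` is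
convex. Its derivative at `ω = 1` is `2 ∑ wᵢ (μᵢˢ - μᵢ)(μᵢˢ - μᵢʷ)`, a sum of nonpositive terms
with at least one negative, and a function with negative derivative at `1` takes a smaller value
somewhere to the right of `1`.
-/

open Set Topology

theorem ConvexOn.finset_sum {𝕜 E β ι : Type*} [Semiring 𝕜] [PartialOrder 𝕜] [AddCommMonoid E]
    [AddCommMonoid β] [PartialOrder β] [IsOrderedAddMonoid β] [SMul 𝕜 E] [Module 𝕜 β]
    {s : Set E} {t : Finset ι} {f : ι → E → β} (hs : Convex 𝕜 s)
    (hf : ∀ i ∈ t, ConvexOn 𝕜 s (f i)) : ConvexOn 𝕜 s fun x => ∑ i ∈ t, f i x := by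
  simpa only [Finset.sum_fn] using
    Finset.sum_induction f (ConvexOn 𝕜 s) (fun _ _ => ConvexOn.add) (convexOn_const 0 hs) hf

theorem HasDerivAt.exists_gt_lt_of_neg {f : ℝ → ℝ} {f' x : ℝ} (hf : HasDerivAt f f' x)
    (hf' : f' < 0) : ∃ y > x, f y < f x := by
  have hslope : ∀ᶠ y in 𝓝[>] x, slope f x y < 0 :=
    (hf.tendsto_slope.mono_left (nhdsGT_le_nhdsNE x)).eventually (gt_mem_nhds hf')
  obtain ⟨y, hy, hxy⟩ := (hslope.and self_mem_nhdsWithin).exists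
  rw [slope_def_field, div_lt_iff₀ (sub_pos.2 hxy), zero_mul, sub_neg] at hy
  exact ⟨y, hxy, hy⟩

theorem Finset.sum_mul_neg_of_pos_imp_neg {ι : Type*} {s : Finset ι} {w f : ι → ℝ}
    (hw : ∀ i ∈ s, 0 ≤ w i) (hpos : ∃ i ∈ s, 0 < w i) (hf : ∀ i ∈ s, 0 < w i → f i < 0) :
    ∑ i ∈ s, w i * f i < 0 := by
  refine Finset.sum_neg' (fun i hi => ?_) ?_
  · rcases (hw i hi).eq_or_lt with hzero | hwi
    · simp [← hzero]
    · exact (mul_neg_of_pos_of_neg hwi (hf i hi hwi)).le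
  · obtain ⟨i, hi, hwi⟩ := hpos
    exact ⟨i, hi, mul_neg_of_pos_of_neg hwi (hf i hi hwi)⟩

section Interpolation

variable (a b c : ℝ)

theorem interpolation_sub_eq_lineMap (ω : ℝ) :
    ω * a + (1 - ω) * b - c = AffineMap.lineMap (b - c) (a - c) ω := by
  rw [AffineMap.lineMap_apply_ring']
  ring

theorem convexOn_univ_interpolation_sub_sq :
    ConvexOn ℝ univ fun ω : ℝ => (ω * a + (1 - ω) * b - c) ^ 2 := by
  simp only [interpolation_sub_eq_lineMap a b c]
  exact (Even.convexOn_pow (𝕜 := ℝ) even_two).comp_affineMap (AffineMap.lineMap (b - c) (a - c))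

theorem hasDerivAt_interpolation_sub_sq (ω : ℝ) :
    HasDerivAt (fun ω : ℝ => (ω * a + (1 - ω) * b - c) ^ 2)
      (2 * (ω * a + (1 - ω) * b - c) * (a - b)) ω := by
  simp only [interpolation_sub_eq_lineMap a b c]
  refine (AffineMap.hasDerivAt_lineMap.fun_pow 2).congr_deriv ?_
  ring

end Interpolation

theorem w2s_mixture_improvement_general {M : ℕ}
    (w : Fin M → ℝ) (hw_nonneg : ∀ i, 0 ≤ w i)
    (μ μw μs : Fin M → ℝ)
    (hw_pos : ∃ i, 0 < w i) :
    ConvexOn ℝ Set.univ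
      (fun ω : ℝ => ∑ i, w i * (ω * μs i + (1 - ω) * μw i - μ i) ^ 2) ∧
    ((∀ i, 0 < w i → (μs i - μw i) * (μs i - μ i) < 0) →
      deriv (fun ω : ℝ => ∑ i, w i * (ω * μs i + (1 - ω) * μw i - μ i) ^ 2) 1 < 0 ∧
      ∃ ω : ℝ, ω > 1 ∧
        ∑ i, w i * (ω * μs i + (1 - ω) * μw i - μ i) ^ 2
          < ∑ i, w i * (1 * μs i + (1 - 1) * μw i - μ i) ^ 2) := by
  set F := fun ω : ℝ => ∑ i, w i * (ω * μs i + (1 - ω) * μw i - μ i) ^ 2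
  have hF : HasDerivAt F (∑ i, w i * (2 * ((μs i - μw i) * (μs i - μ i)))) 1 := by
    refine (HasDerivAt.fun_sum fun i _ =>
      (hasDerivAt_interpolation_sub_sq (μs i) (μw i) (μ i) 1).const_mul (w i)).congr_deriv ?_
    exact Finset.sum_congr rfl fun i _ => by ring
  refine ⟨ConvexOn.finset_sum convex_univ fun i _ =>
    (convexOn_univ_interpolation_sub_sq _ _ _).smul (hw_nonneg i), fun hstrict => ?_⟩
  have hF' : ∑ i, w i * (2 * ((μs i - μw i) * (μs i - μ i))) < 0 :=
    Finset.sum_mul_neg_of_pos_imp_neg (fun i _ => hw_nonneg i)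
      (hw_pos.imp fun i hi => ⟨Finset.mem_univ i, hi⟩)
      fun i _ hwi => by linarith [hstrict i hwi]
  exact ⟨hF.deriv ▸ hF', hF.exists_gt_lt_of_neg hF'⟩

theorem w2s_mixture_improvement {M : ℕ}
    (w : Fin M → ℝ) (hw_nonneg : ∀ i, 0 ≤ w i)
    (μ μw μs : Fin M → ℝ)
    (hbetween : ∀ i, (μ i - μs i) * (μs i - μw i) > 0)
    (hw_pos : ∃ i, 0 < w i)
    (hne : ∃ i, 0 < w i ∧ μs i ≠ μw i) :
    ConvexOn ℝ Set.univ
      (fun ω : ℝ => ∑ i, w i * (ω * μs i + (1 - ω) * μw i - μ i) ^ 2) ∧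
    ((∀ i, 0 < w i → (μs i - μw i) * (μs i - μ i) < 0) →
      deriv (fun ω : ℝ => ∑ i, w i * (ω * μs i + (1 - ω) * μw i - μ i) ^ 2) 1 < 0 ∧
      ∃ ω : ℝ, ω > 1 ∧
        ∑ i, w i * (ω * μs i + (1 - ω) * μw i - μ i) ^ 2
          < ∑ i, w i * (1 * μs i + (1 - 1) * μw i - μ i) ^ 2) :=
  w2s_mixture_improvement_general w hw_nonneg μ μw μs hw_pos
end
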